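/- Assume 0 ≤ λ < λ̃. Then: (i) b̃* < b*; (ii) the function B(s) := (r+λ)·(b̃*/s)^{θ̃} − (r+λ̃)·(b*/s)^{θ} + (λ̃ − λ) is strictly increasing on [b*, ∞); (iii) B(b*) < 0 and B(s) → λ̃ − λ > 0 as s → ∞; and hence (iv) there exists a unique s* ∈ (b*, ∞) with B(s*) = 0, so that the thresholds are ordered b̃* < b* < s*. -/

import Mathlib

/-!
For `s > b*` the derivative of `B` factors, thanks to the identity
`θ (r + λ̃) = θ̃ (r + λ)`, as `B'(s) = θ̃ (r + λ) ((b*/s)^θ - (b̃*/s)^θ̃) / s`, which is positive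
because `b̃*/s < b*/s < 1` and `θ < θ̃`. At `s = b*` only the term `(r + λ)((b̃*/b*)^θ̃ - 1) < 0`
survives, while both powers vanish at infinity; the intermediate value theorem and strict
monotonicity then give exactly one root beyond `b*`.
-/

open Real Filter

/-- `θ = 2(r+λ)/σ²`. -/
noncomputable def perpTheta (r lam sigma : ℝ) : ℝ := 2 * (r + lam) / sigma ^ 2

/-- Optimal exercise threshold `b* = 2rK/(2(r+λ) + σ²)`. -/
noncomputable def perpBstar (r lam sigma K : ℝ) : ℝ := 2 * r * K / (2 * (r + lam) + sigma ^ 2)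

/-- The function `B(s) = (r+λ)·(b̃*/s)^{θ̃} − (r+λ̃)·(b*/s)^{θ} + (λ̃ − λ)` whose
root determines the buyer's optimal purchase threshold `s*`. -/
noncomputable def purchaseB (r lam lamt sigma K s : ℝ) : ℝ :=
  (r + lam) * (perpBstar r lamt sigma K / s) ^ perpTheta r lamt sigma
    - (r + lamt) * (perpBstar r lam sigma K / s) ^ perpTheta r lam sigma
    + (lamt - lam)

open Set Topology

lemma hasDerivAt_div_rpow_const (a p : ℝ) {x : ℝ} (hx : x ≠ 0) :
    HasDerivAt (fun s : ℝ => (a / s) ^ p) (-(p * (a / x) ^ p) / x) x := by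
  rcases eq_or_ne a 0 with rfl | ha
  · rcases eq_or_ne p 0 with rfl | hp
    · simpa using hasDerivAt_const x (1 : ℝ)
    · simpa [Real.zero_rpow hp] using hasDerivAt_const x (0 : ℝ)
  have hax : a / x ≠ 0 := div_ne_zero ha hx
  have hdiv : HasDerivAt (fun s : ℝ => a / s) (-(a / x ^ 2)) x := by
    simpa [div_eq_mul_inv, neg_div, mul_comm] using (hasDerivAt_inv hx).const_mul a
  convert hdiv.rpow_const (p := p) (Or.inl hax) using 1
  rw [Real.rpow_sub_one hax]
  field_simp

lemma tendsto_div_rpow_const_atTop (a : ℝ) {p : ℝ} (hp : 0 < p) :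
    Tendsto (fun s : ℝ => (a / s) ^ p) atTop (𝓝 0) := by
  have hdiv : Tendsto (fun s : ℝ => a / s) atTop (𝓝 0) :=
    tendsto_const_nhds.div_atTop tendsto_id
  simpa [Real.zero_rpow hp.ne', Function.comp_def] using
    (Real.continuousAt_rpow_const 0 p (Or.inr hp.le)).tendsto.comp hdiv

lemma rpow_lt_rpow_of_lt_of_exponent_le {u v p q : ℝ} (hu : 0 ≤ u) (huv : u < v) (hv : v ≤ 1)
    (hq : 0 < q) (hpq : p ≤ q) : u ^ q < v ^ p :=
  calc u ^ q < v ^ q := Real.rpow_lt_rpow hu huv hq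
    _ ≤ v ^ p := Real.rpow_le_rpow_of_exponent_ge (hu.trans_lt huv) hv hpq

lemma StrictMonoOn.existsUnique_eq_zero_Ioi {f : ℝ → ℝ} {a l : ℝ}
    (hf : StrictMonoOn f (Ici a)) (hcont : ContinuousOn f (Ici a)) (ha : f a < 0) (hl : 0 < l)
    (hlim : Tendsto f atTop (𝓝 l)) : ∃! s, s ∈ Ioi a ∧ f s = 0 := by
  obtain ⟨t, hft, hat⟩ :=
    ((hlim.eventually (eventually_gt_nhds hl)).and (eventually_gt_atTop a)).exists
  obtain ⟨s, hs, hfs⟩ :=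
    intermediate_value_Icc hat.le (hcont.mono Icc_subset_Ici_self) ⟨ha.le, hft.le⟩
  have has : a < s := hs.1.lt_of_ne (by rintro rfl; exact ha.ne hfs)
  refine ⟨s, ⟨has, hfs⟩, fun y ⟨hy, hfy⟩ => ?_⟩
  exact hf.injOn (mem_Ici.2 hy.le) (mem_Ici.2 has.le) (hfy.trans hfs.symm)

section Thresholds

variable {r lam lamt sigma K : ℝ}

lemma perpTheta_pos (hsigma : sigma ≠ 0) (hrl : 0 < r + lam) : 0 < perpTheta r lam sigma := by
  unfold perpTheta; positivity

lemma perpTheta_lt_perpTheta (hsigma : sigma ≠ 0) (hlt : lam < lamt) :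
    perpTheta r lam sigma < perpTheta r lamt sigma := by
  unfold perpTheta; gcongr

lemma perpTheta_mul_add_comm :
    perpTheta r lam sigma * (r + lamt) = perpTheta r lamt sigma * (r + lam) := by
  unfold perpTheta; ring

lemma perpBstar_pos (hr : 0 < r) (hK : 0 < K) (hrl : 0 < r + lam) :
    0 < perpBstar r lam sigma K := by
  unfold perpBstar; positivity

lemma perpBstar_lt_perpBstar (hr : 0 < r) (hK : 0 < K) (hrl : 0 < r + lam) (hlt : lam < lamt) :
    perpBstar r lamt sigma K < perpBstar r lam sigma K := by
  unfold perpBstar; gcongr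

lemma hasDerivAt_purchaseB {x : ℝ} (hx : x ≠ 0) :
    HasDerivAt (purchaseB r lam lamt sigma K)
      (perpTheta r lamt sigma * (r + lam) *
        ((perpBstar r lam sigma K / x) ^ perpTheta r lam sigma
          - (perpBstar r lamt sigma K / x) ^ perpTheta r lamt sigma) / x) x := by
  refine ((((hasDerivAt_div_rpow_const _ _ hx).const_mul (r + lam)).sub
    ((hasDerivAt_div_rpow_const _ _ hx).const_mul (r + lamt))).add_const
      (lamt - lam)).congr_deriv ?_
  linear_combination (perpBstar r lam sigma K / x) ^ perpTheta r lam sigma / x *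
    perpTheta_mul_add_comm (r := r) (lam := lam) (lamt := lamt) (sigma := sigma)

lemma continuousOn_purchaseB : ContinuousOn (purchaseB r lam lamt sigma K) (Ioi 0) :=
  fun _ hx => (hasDerivAt_purchaseB (ne_of_gt hx)).continuousAt.continuousWithinAt

lemma strictMonoOn_purchaseB (hr : 0 < r) (hsigma : sigma ≠ 0) (hK : 0 < K)
    (hrl : 0 < r + lam) (hlt : lam < lamt) :
    StrictMonoOn (purchaseB r lam lamt sigma K) (Ici (perpBstar r lam sigma K)) := by
  have hb := perpBstar_pos (sigma := sigma) hr hK hrl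
  refine strictMonoOn_of_deriv_pos (convex_Ici _)
    (continuousOn_purchaseB.mono (Ici_subset_Ioi.2 hb)) fun x hx => ?_
  rw [interior_Ici] at hx
  have hx0 : 0 < x := hb.trans hx
  rw [(hasDerivAt_purchaseB hx0.ne').deriv]
  have hpow : (perpBstar r lamt sigma K / x) ^ perpTheta r lamt sigma
      < (perpBstar r lam sigma K / x) ^ perpTheta r lam sigma :=
    rpow_lt_rpow_of_lt_of_exponent_le
      (div_pos (perpBstar_pos hr hK (by linarith)) hx0).le
      (div_lt_div_of_pos_right (perpBstar_lt_perpBstar hr hK hrl hlt) hx0)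
      ((div_le_one hx0).2 hx.le) (perpTheta_pos hsigma (by linarith))
      (perpTheta_lt_perpTheta hsigma hlt).le
  have := perpTheta_pos hsigma (show 0 < r + lamt by linarith)
  have := sub_pos.2 hpow
  positivity

lemma purchaseB_perpBstar_neg (hr : 0 < r) (hsigma : sigma ≠ 0) (hK : 0 < K)
    (hrl : 0 < r + lam) (hlt : lam < lamt) :
    purchaseB r lam lamt sigma K (perpBstar r lam sigma K) < 0 := by
  have hb := perpBstar_pos (sigma := sigma) hr hK hrl
  have hratio : (perpBstar r lamt sigma K / perpBstar r lam sigma K) ^ perpTheta r lamt sigma < 1 :=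
    Real.rpow_lt_one (div_pos (perpBstar_pos hr hK (by linarith)) hb).le
      ((div_lt_one hb).2 (perpBstar_lt_perpBstar hr hK hrl hlt))
      (perpTheta_pos hsigma (by linarith))
  rw [purchaseB, div_self hb.ne', Real.one_rpow]
  nlinarith

lemma tendsto_purchaseB_atTop (hsigma : sigma ≠ 0) (hrl : 0 < r + lam) (hlt : lam < lamt) :
    Tendsto (purchaseB r lam lamt sigma K) atTop (𝓝 (lamt - lam)) := by
  have h := (((tendsto_div_rpow_const_atTop (perpBstar r lamt sigma K)
    (perpTheta_pos hsigma (show 0 < r + lamt by linarith))).const_mul (r + lam)).sub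
    ((tendsto_div_rpow_const_atTop (perpBstar r lam sigma K)
      (perpTheta_pos hsigma hrl)).const_mul (r + lamt))).add_const (lamt - lam)
  simp only [mul_zero, sub_zero, zero_add] at h
  exact h

end Thresholds

/-- **Existence, uniqueness and ordering of the purchase threshold
(Proposition 3.7).**  Assume `0 ≤ λ < λ̃`.  Then: (i) `b̃* < b*`; (ii) `B` is
strictly increasing on `[b*, ∞)`; (iii) `B(b*) < 0` and `B(s) → λ̃ − λ > 0` as
`s → ∞`; hence (iv) there is a unique `s* ∈ (b*, ∞)` with `B(s*) = 0`, so that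
the thresholds are ordered `b̃* < b* < s*`. -/
theorem purchaseB_unique_root
    (r lam lamt sigma K : ℝ) (hr : 0 < r) (hsigma : 0 < sigma) (hK : 0 < K)
    (hlam : 0 ≤ lam) (hlt : lam < lamt) :
    perpBstar r lamt sigma K < perpBstar r lam sigma K
    ∧ StrictMonoOn (fun s => purchaseB r lam lamt sigma K s)
        (Set.Ici (perpBstar r lam sigma K))
    ∧ purchaseB r lam lamt sigma K (perpBstar r lam sigma K) < 0
    ∧ Tendsto (fun s => purchaseB r lam lamt sigma K s) atTop (nhds (lamt - lam))
    ∧ 0 < lamt - lam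
    ∧ ∃! s : ℝ, s ∈ Set.Ioi (perpBstar r lam sigma K)
        ∧ purchaseB r lam lamt sigma K s = 0 := by
  have hrl : 0 < r + lam := by linarith
  have hmono := strictMonoOn_purchaseB hr hsigma.ne' hK hrl hlt
  have hneg := purchaseB_perpBstar_neg hr hsigma.ne' hK hrl hlt
  have hlim := tendsto_purchaseB_atTop (K := K) hsigma.ne' hrl hlt
  have hcont : ContinuousOn (purchaseB r lam lamt sigma K) (Ici (perpBstar r lam sigma K)) :=
    continuousOn_purchaseB.mono (Ici_subset_Ioi.2 (perpBstar_pos hr hK hrl))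
  exact ⟨perpBstar_lt_perpBstar hr hK hrl hlt, hmono, hneg, hlim, sub_pos.2 hlt,
    hmono.existsUnique_eq_zero_Ioi hcont hneg (sub_pos.2 hlt) hlim⟩
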